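/- arXiv:2108.08652 — 2 statements merged into one kernel-verified Lean document; each statement's English description precedes it below -/
import Mathlib

section
/- Let h : ℝⁿ → ℝⁿ be C¹ with bounded derivative, F_d = id + d·h, A_d = (DF_d)^{-T} and I_d = det DF_d, and M_d = I_d A_dᵀ A_d. Then d ↦ M_d(x) is differentiable at d = 0 with derivative M = I·div h(x) − ∇h(x) − (∇h(x))ᵀ, for each x. -/
/-!
At `d = 0` each factor of `det (1 + d • B) • ((1 + d • B)⁻¹ * (1 + d • B)⁻¹ᵀ)` takes its value at
the identity, so the product rule leaves three first-order terms: `tr B` from the determinant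
(the linear coefficient of `det (1 + X • B)`), `-B` from inversion at `1`, and `-Bᵀ` from
`(1 + d • B)⁻¹ᵀ = (1 + d • Bᵀ)⁻¹`. For `B = (∇h)ᵀ` this is `I div h - ∇h - (∇h)ᵀ`.
-/

open Matrix

section

variable {𝕜 ι : Type*} [NontriviallyNormedField 𝕜] [Fintype ι] [DecidableEq ι]

theorem Matrix.hasDerivAt_det_one_add_smul (B : Matrix ι ι 𝕜) :
    HasDerivAt (fun d : 𝕜 => det (1 + d • B)) (trace B) 0 := by
  have h := (det (1 + (Polynomial.X : Polynomial 𝕜) • B.map Polynomial.C)).hasDerivAt 0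
  rw [derivative_det_one_add_X_smul] at h
  convert h using 2 with d
  simp [eval_det, ← smul_eq_mul_diagonal]

end

section

variable {𝕜 ι : Type*} [RCLike 𝕜] [Fintype ι] [DecidableEq ι]

-- A submultiplicative norm, for the calculus of normed algebras; it induces the product topology,
-- so the derivatives below are the entrywise ones.
attribute [local instance] Matrix.linftyOpNormedRing Matrix.linftyOpNormedAlgebra

theorem Matrix.hasDerivAt_inv_one_add_smul (B : Matrix ι ι 𝕜) :
    HasDerivAt (fun d : 𝕜 => (1 + d • B)⁻¹) (-B) 0 := by
  have hline : HasDerivAt (fun d : 𝕜 => 1 + d • B) B 0 :=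
    (((hasDerivAt_id 0).smul_const B).const_add 1).congr_deriv (one_smul 𝕜 B)
  have h := (hasFDerivAt_ringInverse (𝕜 := 𝕜) (1 : (Matrix ι ι 𝕜)ˣ)).comp_hasDerivAt_of_eq
    0 hline (by simp)
  simp only [Function.comp_def, ← nonsing_inv_eq_ringInverse, Units.val_one, inv_one,
    _root_.neg_apply, ContinuousLinearMap.mulLeftRight_apply, one_mul, mul_one] at h
  exact h

theorem Matrix.hasDerivAt_det_smul_inv_mul_inv_transpose (B : Matrix ι ι 𝕜) :
    HasDerivAt (fun d : 𝕜 => det (1 + d • B) • ((1 + d • B)⁻¹ * (1 + d • B)⁻¹ᵀ))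
      (trace B • 1 - B - Bᵀ) 0 := by
  have hinvT : HasDerivAt (fun d : 𝕜 => (1 + d • B)⁻¹ᵀ) (-Bᵀ) 0 := by
    simpa only [transpose_nonsing_inv, transpose_add, transpose_one, transpose_smul]
      using hasDerivAt_inv_one_add_smul Bᵀ
  have h := (hasDerivAt_det_one_add_smul B).fun_smul
    ((hasDerivAt_inv_one_add_smul B).fun_mul hinvT)
  simp only [zero_smul, add_zero, det_one, inv_one, transpose_one, one_smul, mul_one,
    one_mul] at h
  exact h.congr_deriv (by abel)

end

theorem stmt_10_general {n : ℕ} (h : EuclideanSpace ℝ (Fin n) → EuclideanSpace ℝ (Fin n))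
    (x : EuclideanSpace ℝ (Fin n)) :
    let J : Matrix (Fin n) (Fin n) ℝ :=
      Matrix.of fun i j => fderiv ℝ h x (EuclideanSpace.single j 1) i
    HasDerivAt
      (fun d : ℝ =>
        ((1 : Matrix (Fin n) (Fin n) ℝ) + d • J.transpose).det •
          (((1 : Matrix (Fin n) (Fin n) ℝ) + d • J.transpose)⁻¹ *
            (((1 : Matrix (Fin n) (Fin n) ℝ) + d • J.transpose)⁻¹).transpose))
      (J.trace • (1 : Matrix (Fin n) (Fin n) ℝ) - J - J.transpose) 0 := by
  intro J
  have hM := hasDerivAt_det_smul_inv_mul_inv_transpose Jᵀ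
  rw [trace_transpose, transpose_transpose, sub_right_comm] at hM
  exact hM

/-- d ↦ M_d(x) = I_d A_dᵀ A_d is differentiable at d = 0 with derivative
M = I div h − ∇h − (∇h)ᵀ. Here DF_d = I + d(∇h)ᵀ, A_d = (DF_d)^{−T}, I_d = det DF_d. -/
theorem stmt_10 {n : ℕ} (h : EuclideanSpace ℝ (Fin n) → EuclideanSpace ℝ (Fin n))
    (hh : ContDiff ℝ 1 h) (hbdd : ∃ M, ∀ x, ‖fderiv ℝ h x‖ ≤ M)
    (x : EuclideanSpace ℝ (Fin n)) :
    let J : Matrix (Fin n) (Fin n) ℝ :=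
      Matrix.of fun i j => fderiv ℝ h x (EuclideanSpace.single j 1) i
    HasDerivAt
      (fun d : ℝ =>
        ((1 : Matrix (Fin n) (Fin n) ℝ) + d • J.transpose).det •
          (((1 : Matrix (Fin n) (Fin n) ℝ) + d • J.transpose)⁻¹ *
            (((1 : Matrix (Fin n) (Fin n) ℝ) + d • J.transpose)⁻¹).transpose))
      (J.trace • (1 : Matrix (Fin n) (Fin n) ℝ) - J - J.transpose) 0 :=
  stmt_10_general h x
end

section
/- Smooth version of the transport identity: let Ω ⊂ ℝⁿ be a bounded domain with smooth boundary, a, u, v, h smooth (a scalar, h vector field), and M = I div h − (∇h)ᵀ − ∇h. Then the pointwise divergence identity holds: a (M∇u)·∇v = ∇·(a∇u)(h·∇v) + ∇·(a∇v)(h·∇u) − (∇u·∇v)(h·∇a) − ∇·[ a (∇u·h)∇v + a (∇v·h)∇u − a (∇u·∇v) h ]. -/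
open scoped RealInnerProductSpace Gradient

/-!
Expand every divergence on the right with the product rule `div (φ • F) = Dφ F + φ div F` and
the derivative of inner products. The first-order terms in `a` and the Laplacians of `u`, `v`
cancel outright; of the second-order terms, `D²u (∇v, h)` and `D²v (∇u, h)` cancel against
`D²u (h, ∇v)` and `D²v (h, ∇u)` by symmetry of the Hessians, and what is left is
`a (div h ∇u·∇v − (Dh ∇u)·∇v − ∇u·(Dh ∇v))`.
-/

noncomputable def divergence {E : Type*} [NormedAddCommGroup E] [NormedSpace ℝ E]
    (F : E → E) (x : E) : ℝ :=
  LinearMap.trace ℝ E (fderiv ℝ F x)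

section Divergence

variable {E : Type*} [NormedAddCommGroup E] [NormedSpace ℝ E] {F G : E → E} {φ : E → ℝ} {x : E}

theorem divergence_add (hF : DifferentiableAt ℝ F x) (hG : DifferentiableAt ℝ G x) :
    divergence (fun y => F y + G y) x = divergence F x + divergence G x := by
  simp only [divergence, fderiv_fun_add hF hG, ContinuousLinearMap.toLinearMap_add, map_add]

theorem divergence_sub (hF : DifferentiableAt ℝ F x) (hG : DifferentiableAt ℝ G x) :
    divergence (fun y => F y - G y) x = divergence F x - divergence G x := by
  simp only [divergence, fderiv_fun_sub hF hG, ContinuousLinearMap.toLinearMap_sub, map_sub]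

theorem divergence_smul [FiniteDimensional ℝ E] (hφ : DifferentiableAt ℝ φ x)
    (hF : DifferentiableAt ℝ F x) :
    divergence (fun y => φ y • F y) x = fderiv ℝ φ x (F x) + φ x * divergence F x := by
  simp only [divergence, fderiv_fun_smul hφ hF, ContinuousLinearMap.toLinearMap_add,
    ContinuousLinearMap.toLinearMap_smul, map_add, map_smul, smul_eq_mul]
  rw [add_comm]
  congr 1
  exact LinearMap.trace_smulRight _ _

end Divergence

section Euclidean

variable {ι : Type*} [Fintype ι] [DecidableEq ι]

theorem divergence_eq_sum_fderiv_single (F : EuclideanSpace ℝ ι → EuclideanSpace ℝ ι)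
    (x : EuclideanSpace ℝ ι) :
    divergence F x = ∑ i, fderiv ℝ F x (EuclideanSpace.single i 1) i := by
  rw [divergence, LinearMap.trace_eq_matrix_trace ℝ (EuclideanSpace.basisFun ι ℝ).toBasis]
  simp [Matrix.trace, LinearMap.toMatrix_apply]

theorem divergence_eq_sum_fderiv_coord {F : EuclideanSpace ℝ ι → EuclideanSpace ℝ ι}
    {x : EuclideanSpace ℝ ι} (hF : DifferentiableAt ℝ F x) :
    divergence F x = ∑ i, fderiv ℝ (fun y => F y i) x (EuclideanSpace.single i 1) := by
  rw [divergence_eq_sum_fderiv_single]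
  refine Finset.sum_congr rfl fun i _ => ?_
  have hFi : HasFDerivAt (fun y => F y i) ((EuclideanSpace.proj i).comp (fderiv ℝ F x)) x :=
    (EuclideanSpace.proj (𝕜 := ℝ) i).hasFDerivAt.comp x hF.hasFDerivAt
  rw [hFi.fderiv]
  rfl

end Euclidean

theorem ContDiffAt.differentiableAt_fderiv {𝕜 E F : Type*} [NontriviallyNormedField 𝕜]
    [NormedAddCommGroup E] [NormedSpace 𝕜 E] [NormedAddCommGroup F] [NormedSpace 𝕜 F]
    {f : E → F} {x : E} (hf : ContDiffAt 𝕜 2 f x) :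
    DifferentiableAt 𝕜 (fderiv 𝕜 f) x :=
  (hf.fderiv_right (m := 1) le_rfl).differentiableAt one_ne_zero

section Gradient

variable {F : Type*} [NormedAddCommGroup F] [InnerProductSpace ℝ F] [CompleteSpace F]
  {f : F → ℝ} {x : F}

theorem hasFDerivAt_gradient (hf : DifferentiableAt ℝ (fderiv ℝ f) x) :
    HasFDerivAt (∇ f)
      ((InnerProductSpace.toDual ℝ F).symm.toContinuousLinearEquiv.toContinuousLinearMap
        ∘L fderiv ℝ (fderiv ℝ f) x) x :=
  (InnerProductSpace.toDual ℝ F).symm.toContinuousLinearEquiv.hasFDerivAt.comp x hf.hasFDerivAt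

theorem inner_fderiv_gradient (hf : DifferentiableAt ℝ (fderiv ℝ f) x) (w z : F) :
    ⟪fderiv ℝ (∇ f) x w, z⟫ = fderiv ℝ (fderiv ℝ f) x w z := by
  rw [(hasFDerivAt_gradient hf).fderiv]
  exact InnerProductSpace.toDual_symm_apply

theorem ContDiffAt.differentiableAt_gradient (hf : ContDiffAt ℝ 2 f x) :
    DifferentiableAt ℝ (∇ f) x :=
  (hasFDerivAt_gradient hf.differentiableAt_fderiv).differentiableAt

theorem ContDiffAt.inner_fderiv_gradient_comm (hf : ContDiffAt ℝ 2 f x) (w z : F) :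
    ⟪fderiv ℝ (∇ f) x w, z⟫ = ⟪fderiv ℝ (∇ f) x z, w⟫ := by
  have hf' := hf.differentiableAt_fderiv
  rw [inner_fderiv_gradient hf', inner_fderiv_gradient hf']
  exact hf.isSymmSndFDerivAt (by simp) w z

end Gradient

theorem fderiv_mul_inner_apply {E F : Type*} [NormedAddCommGroup E] [NormedSpace ℝ E]
    [NormedAddCommGroup F] [InnerProductSpace ℝ F] {a : E → ℝ} {P Q : E → F} {x : E}
    (ha : DifferentiableAt ℝ a x) (hP : DifferentiableAt ℝ P x) (hQ : DifferentiableAt ℝ Q x)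
    (w : E) :
    fderiv ℝ (fun y => a y * ⟪P y, Q y⟫) x w
      = fderiv ℝ a x w * ⟪P x, Q x⟫ + a x * (⟪fderiv ℝ P x w, Q x⟫ + ⟪P x, fderiv ℝ Q x w⟫) := by
  rw [fderiv_fun_mul ha (hP.inner ℝ hQ), add_apply, smul_apply, smul_apply,
    fderiv_inner_apply ℝ hP hQ, smul_eq_mul, smul_eq_mul]
  ring

theorem divergence_transport_identity {E : Type*} [NormedAddCommGroup E]
    [InnerProductSpace ℝ E] [FiniteDimensional ℝ E] {a u v : E → ℝ} {h : E → E} {x : E}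
    (ha : DifferentiableAt ℝ a x) (hu : ContDiffAt ℝ 2 u x) (hv : ContDiffAt ℝ 2 v x)
    (hh : DifferentiableAt ℝ h x) :
    a x * (divergence h x * ⟪∇ u x, ∇ v x⟫
        - ⟪fderiv ℝ h x (∇ u x), ∇ v x⟫ - ⟪∇ u x, fderiv ℝ h x (∇ v x)⟫)
      = divergence (fun y => a y • ∇ u y) x * ⟪h x, ∇ v x⟫
        + divergence (fun y => a y • ∇ v y) x * ⟪h x, ∇ u x⟫
        - ⟪∇ u x, ∇ v x⟫ * ⟪h x, ∇ a x⟫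
        - divergence (fun y => (a y * ⟪∇ u y, h y⟫) • ∇ v y + (a y * ⟪∇ v y, h y⟫) • ∇ u y
            - (a y * ⟪∇ u y, ∇ v y⟫) • h y) x := by
  have hgu := hu.differentiableAt_gradient
  have hgv := hv.differentiableAt_gradient
  have hau := ha.fun_mul (hgu.inner ℝ hh)
  have hav := ha.fun_mul (hgv.inner ℝ hh)
  have hauv := ha.fun_mul (hgu.inner ℝ hgv)
  rw [divergence_sub ((hau.fun_smul hgv).fun_add (hav.fun_smul hgu)) (hauv.fun_smul hh),
    divergence_add (hau.fun_smul hgv) (hav.fun_smul hgu), divergence_smul hau hgv,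
    divergence_smul hav hgu, divergence_smul hauv hh, divergence_smul ha hgu,
    divergence_smul ha hgv, fderiv_mul_inner_apply ha hgu hh, fderiv_mul_inner_apply ha hgv hh,
    fderiv_mul_inner_apply ha hgu hgv, real_inner_comm (∇ a x) (h x), inner_gradient_left (f := a),
    real_inner_comm (∇ u x) (h x), real_inner_comm (∇ v x) (h x),
    real_inner_comm (fderiv ℝ h x (∇ u x)) (∇ v x),
    real_inner_comm (fderiv ℝ (∇ v) x (h x)) (∇ u x),
    hu.inner_fderiv_gradient_comm (∇ v x) (h x), hv.inner_fderiv_gradient_comm (∇ u x) (h x)]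
  ring

/-- Pointwise divergence-form identity underlying Lemma 5.1:
a(M∇u)·∇v = ∇·(a∇u)(h·∇v) + ∇·(a∇v)(h·∇u) − (∇u·∇v)(h·∇a)
            − ∇·[a(∇u·h)∇v + a(∇v·h)∇u − a(∇u·∇v)h]. -/
theorem stmt_12 {n : ℕ}
    (a u v : EuclideanSpace ℝ (Fin n) → ℝ)
    (h : EuclideanSpace ℝ (Fin n) → EuclideanSpace ℝ (Fin n))
    (ha : ContDiff ℝ 2 a) (hu : ContDiff ℝ 2 u) (hv : ContDiff ℝ 2 v)
    (hh : ContDiff ℝ 2 h) (x : EuclideanSpace ℝ (Fin n)) :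
    a x * ((∑ i, fderiv ℝ h x (EuclideanSpace.single i 1) i)
            * ⟪gradient u x, gradient v x⟫
          - ⟪fderiv ℝ h x (gradient u x), gradient v x⟫
          - ⟪gradient u x, fderiv ℝ h x (gradient v x)⟫)
      = (∑ i, fderiv ℝ (fun y => a y * gradient u y i) x (EuclideanSpace.single i 1))
          * ⟪h x, gradient v x⟫
        + (∑ i, fderiv ℝ (fun y => a y * gradient v y i) x (EuclideanSpace.single i 1))
          * ⟪h x, gradient u x⟫
        - ⟪gradient u x, gradient v x⟫ * ⟪h x, gradient a x⟫
        - ∑ i, fderiv ℝ (fun y =>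
            (a y * ⟪gradient u y, h y⟫) * gradient v y i
            + (a y * ⟪gradient v y, h y⟫) * gradient u y i
            - (a y * ⟪gradient u y, gradient v y⟫) * h y i) x
            (EuclideanSpace.single i 1) := by
  have hda : DifferentiableAt ℝ a x := ha.differentiable two_ne_zero x
  have hdh : DifferentiableAt ℝ h x := hh.differentiable two_ne_zero x
  have hgu := hu.contDiffAt.differentiableAt_gradient (x := x)
  have hgv := hv.contDiffAt.differentiableAt_gradient (x := x)
  have huh := hgu.inner ℝ hdh
  have hvh := hgv.inner ℝ hdh
  have huv := hgu.inner ℝ hgv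
  have hJ : DifferentiableAt ℝ (fun y => (a y * ⟪∇ u y, h y⟫) • ∇ v y
      + (a y * ⟪∇ v y, h y⟫) • ∇ u y - (a y * ⟪∇ u y, ∇ v y⟫) • h y) x := by fun_prop
  have key := divergence_transport_identity hda hu.contDiffAt hv.contDiffAt hdh
  rw [divergence_eq_sum_fderiv_single h, divergence_eq_sum_fderiv_coord (hda.fun_smul hgu),
    divergence_eq_sum_fderiv_coord (hda.fun_smul hgv), divergence_eq_sum_fderiv_coord hJ] at key
  exact key
end
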